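/- arXiv:2605.00614 — 5 statements merged into one kernel-verified Lean document; each statement's English description precedes it below -/
import Mathlib

section
/- Let λ be an N×R⁰ matrix, f a T×R⁰ matrix, Λ an N×R matrix, F a T×R matrix, and W an N×T matrix. Then ‖λ f' − Λ F' − W‖²_HS ≥ Tr(M_F W' M_λ W M_F) = ‖M_λ W M_F‖²_HS. -/
open Matrix MeasureTheory
open scoped BigOperators

/-- Squared Frobenius (Hilbert–Schmidt) norm of a real matrix. -/
noncomputable def frobSq {n m : ℕ} (A : Matrix (Fin n) (Fin m) ℝ) : ℝ :=
  Matrix.trace (A * Aᵀ)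

/-- Operator (spectral) norm of a real matrix. -/
noncomputable def opNorm {n m : ℕ} (A : Matrix (Fin n) (Fin m) ℝ) : ℝ :=
  ‖LinearMap.toContinuousLinearMap (Matrix.toEuclideanLin A)‖

/-- Orthogonal projection matrix onto the column space of `A`. -/
noncomputable def projMat {n m : ℕ} (A : Matrix (Fin n) (Fin m) ℝ) : Matrix (Fin n) (Fin n) ℝ :=
  Matrix.toEuclideanLin.symm
    (((LinearMap.range (Matrix.toEuclideanLin A)).subtypeL.comp
      (Submodule.orthogonalProjectionOnto (LinearMap.range (Matrix.toEuclideanLin A))) :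
        EuclideanSpace ℝ (Fin n) →L[ℝ] EuclideanSpace ℝ (Fin n)) :
        EuclideanSpace ℝ (Fin n) →ₗ[ℝ] EuclideanSpace ℝ (Fin n))

/-- Annihilator `M_A = I - P_A`. -/
noncomputable def annMat {n m : ℕ} (A : Matrix (Fin n) (Fin m) ℝ) : Matrix (Fin n) (Fin n) ℝ :=
  1 - projMat A

/-- `mu S r` is the `r`-th largest eigenvalue (1-based, with multiplicity) of the
symmetric matrix `S`; it is `0` if `S` is not symmetric or `r ∉ {1,…,n}`. -/
noncomputable def mu {n : ℕ} (S : Matrix (Fin n) (Fin n) ℝ) (r : ℕ) : ℝ :=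
  if h : S.IsHermitian ∧ 1 ≤ r ∧ r ≤ n then
    (h.1.eigenvalues ∘ Tuple.sort h.1.eigenvalues)
      (Fin.rev ⟨r - 1, by obtain ⟨-, h1, h2⟩ := h; omega⟩)
  else 0

/-! Since `M_λ λ = 0` and `F' M_F = 0`, sandwiching the residual between the annihilators gives
`M_λ (λ f' − Λ F' − W) M_F = −M_λ W M_F`. Multiplying by an orthogonal projection `Q` on either
side cannot increase the Hilbert–Schmidt norm, by Pythagoras `‖X‖² = ‖XQ‖² + ‖X(1 − Q)‖²`.
The trace identity is `‖A‖² = Tr(A'A)` together with `M_λ² = M_λ`. -/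

section Projection

variable {n m : ℕ}

lemma transpose_eq_of_isStarProjection {Q : Matrix (Fin n) (Fin n) ℝ} (hQ : IsStarProjection Q) :
    Qᵀ = Q :=
  hQ.isSelfAdjoint.star_eq

lemma toEuclideanCLM_projMat (A : Matrix (Fin n) (Fin m) ℝ) :
    toEuclideanCLM (n := Fin n) (𝕜 := ℝ) (projMat A) =
      (LinearMap.range (toEuclideanLin A)).starProjection := by
  apply ContinuousLinearMap.coe_injective
  rw [coe_toEuclideanCLM_eq_toEuclideanLin, projMat, LinearEquiv.apply_symm_apply]
  rfl

lemma isStarProjection_projMat (A : Matrix (Fin n) (Fin m) ℝ) : IsStarProjection (projMat A) := by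
  have h := (isStarProjection_starProjection (U := LinearMap.range (toEuclideanLin A))).map
    (toEuclideanCLM (n := Fin n) (𝕜 := ℝ)).symm.toStarAlgHom
  rwa [← toEuclideanCLM_projMat, StarAlgEquiv.toStarAlgHom_apply,
    StarAlgEquiv.symm_apply_apply] at h

lemma isStarProjection_annMat (A : Matrix (Fin n) (Fin m) ℝ) : IsStarProjection (annMat A) :=
  (isStarProjection_projMat A).one_sub

lemma projMat_mulVec_mulVec (A : Matrix (Fin n) (Fin m) ℝ) (v : Fin m → ℝ) :
    projMat A *ᵥ (A *ᵥ v) = A *ᵥ v := by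
  have hmem : WithLp.toLp 2 (A *ᵥ v) ∈ LinearMap.range (toEuclideanLin A) :=
    ⟨WithLp.toLp 2 v, rfl⟩
  have := congrArg WithLp.ofLp (Submodule.starProjection_eq_self_iff.mpr hmem)
  rwa [← toEuclideanCLM_projMat, ofLp_toEuclideanCLM] at this

lemma projMat_mul_self (A : Matrix (Fin n) (Fin m) ℝ) : projMat A * A = A :=
  ext_iff_mulVec.mpr fun v ↦ by rw [← mulVec_mulVec, projMat_mulVec_mulVec]

lemma annMat_mul_self (A : Matrix (Fin n) (Fin m) ℝ) : annMat A * A = 0 := by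
  rw [annMat, Matrix.sub_mul, projMat_mul_self, Matrix.one_mul, sub_self]

lemma transpose_mul_annMat (A : Matrix (Fin n) (Fin m) ℝ) : Aᵀ * annMat A = 0 := by
  rw [← transpose_eq_of_isStarProjection (isStarProjection_annMat A), ← transpose_mul,
    annMat_mul_self, transpose_zero]

end Projection

section Frobenius

variable {n m : ℕ}

lemma frobSq_transpose (A : Matrix (Fin n) (Fin m) ℝ) : frobSq Aᵀ = frobSq A := by
  rw [frobSq, frobSq, transpose_transpose, trace_mul_comm]

lemma frobSq_nonneg (A : Matrix (Fin n) (Fin m) ℝ) : 0 ≤ frobSq A :=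
  (posSemidef_self_mul_conjTranspose A).trace_nonneg

lemma frobSq_neg (A : Matrix (Fin n) (Fin m) ℝ) : frobSq (-A) = frobSq A := by
  simp [frobSq]

lemma frobSq_mul_of_isStarProjection (X : Matrix (Fin n) (Fin m) ℝ)
    {Q : Matrix (Fin m) (Fin m) ℝ} (hQ : IsStarProjection Q) :
    frobSq (X * Q) = trace (X * Q * Xᵀ) := by
  rw [frobSq, transpose_mul, transpose_eq_of_isStarProjection hQ, ← Matrix.mul_assoc,
    Matrix.mul_assoc X, hQ.isIdempotentElem.eq]

lemma frobSq_mul_add_frobSq_mul_one_sub (X : Matrix (Fin n) (Fin m) ℝ)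
    {Q : Matrix (Fin m) (Fin m) ℝ} (hQ : IsStarProjection Q) :
    frobSq (X * Q) + frobSq (X * (1 - Q)) = frobSq X := by
  rw [frobSq_mul_of_isStarProjection X hQ, frobSq_mul_of_isStarProjection X hQ.one_sub,
    ← trace_add, ← Matrix.add_mul, ← Matrix.mul_add, add_sub_cancel, Matrix.mul_one, frobSq]

lemma frobSq_mul_le_of_isStarProjection (X : Matrix (Fin n) (Fin m) ℝ)
    {Q : Matrix (Fin m) (Fin m) ℝ} (hQ : IsStarProjection Q) :
    frobSq (X * Q) ≤ frobSq X := by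
  linarith [frobSq_mul_add_frobSq_mul_one_sub X hQ, frobSq_nonneg (X * (1 - Q))]

lemma frobSq_mul_le_of_isStarProjection_left (X : Matrix (Fin n) (Fin m) ℝ)
    {Q : Matrix (Fin n) (Fin n) ℝ} (hQ : IsStarProjection Q) :
    frobSq (Q * X) ≤ frobSq X := by
  rw [← frobSq_transpose, transpose_mul, transpose_eq_of_isStarProjection hQ,
    ← frobSq_transpose X]
  exact frobSq_mul_le_of_isStarProjection Xᵀ hQ

lemma trace_mul_transpose_mul_eq_frobSq (X : Matrix (Fin n) (Fin m) ℝ)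
    {P : Matrix (Fin n) (Fin n) ℝ} {Q : Matrix (Fin m) (Fin m) ℝ}
    (hP : IsStarProjection P) (hQ : IsStarProjection Q) :
    trace (Q * Xᵀ * P * X * Q) = frobSq (P * X * Q) := by
  rw [← frobSq_transpose, transpose_mul, transpose_mul, transpose_eq_of_isStarProjection hP,
    transpose_eq_of_isStarProjection hQ, ← Matrix.mul_assoc, frobSq_mul_of_isStarProjection _ hP,
    transpose_mul, transpose_eq_of_isStarProjection hQ, transpose_transpose]
  simp only [Matrix.mul_assoc]

end Frobenius

lemma annMat_mul_sub_sub_mul_annMat {N T R0 R : ℕ}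
    (lam : Matrix (Fin N) (Fin R0) ℝ) (f : Matrix (Fin T) (Fin R0) ℝ)
    (Λ : Matrix (Fin N) (Fin R) ℝ) (F : Matrix (Fin T) (Fin R) ℝ)
    (W : Matrix (Fin N) (Fin T) ℝ) :
    annMat lam * (lam * fᵀ - Λ * Fᵀ - W) * annMat F = -(annMat lam * W * annMat F) := by
  have hlam : annMat lam * (lam * fᵀ) = 0 := by
    rw [← Matrix.mul_assoc, annMat_mul_self, Matrix.zero_mul]
  have hF : Λ * Fᵀ * annMat F = 0 := by
    rw [Matrix.mul_assoc, transpose_mul_annMat, Matrix.mul_zero]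
  rw [Matrix.mul_sub, Matrix.mul_sub, hlam, Matrix.sub_mul, Matrix.sub_mul,
    Matrix.mul_assoc _ (Λ * Fᵀ), hF]
  simp

/-- For any N×R⁰ matrix λ, T×R⁰ matrix f, N×R matrix Λ, T×R matrix F and
N×T matrix W: ‖λf' − ΛF' − W‖²_HS ≥ Tr(M_F W' M_λ W M_F) = ‖M_λ W M_F‖²_HS. -/
theorem statement1 {N T R0 R : ℕ}
    (lam : Matrix (Fin N) (Fin R0) ℝ) (f : Matrix (Fin T) (Fin R0) ℝ)
    (Λ : Matrix (Fin N) (Fin R) ℝ) (F : Matrix (Fin T) (Fin R) ℝ)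
    (W : Matrix (Fin N) (Fin T) ℝ) :
    frobSq (lam * fᵀ - Λ * Fᵀ - W) ≥
      Matrix.trace (annMat F * Wᵀ * annMat lam * W * annMat F) ∧
    Matrix.trace (annMat F * Wᵀ * annMat lam * W * annMat F) =
      frobSq (annMat lam * W * annMat F) := by
  have hMl := isStarProjection_annMat lam
  have hMF := isStarProjection_annMat F
  have htrace := trace_mul_transpose_mul_eq_frobSq W hMl hMF
  refine ⟨?_, htrace⟩
  calc trace (annMat F * Wᵀ * annMat lam * W * annMat F)
      = frobSq (annMat lam * (lam * fᵀ - Λ * Fᵀ - W) * annMat F) := by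
        rw [htrace, annMat_mul_sub_sub_mul_annMat, frobSq_neg]
    _ ≤ frobSq (annMat lam * (lam * fᵀ - Λ * Fᵀ - W)) :=
        frobSq_mul_le_of_isStarProjection _ hMF
    _ ≤ frobSq (lam * fᵀ - Λ * Fᵀ - W) :=
        frobSq_mul_le_of_isStarProjection_left _ hMl
end

section
/- Let W, e, L be N×T matrices with rank(L) ≤ R⁰, and let R, R⁰ be nonnegative integers with R + R⁰ ≤ T. Then Σ_{r=R+1}^{T} μ_r[(W + e + L)'(W + e + L)] ≥ Σ_{r=R+R⁰+1}^{T} μ_r(W'W) + Tr(e e') − 2(R+R⁰)‖e‖² + 2 Tr(W e') − 2(R+R⁰)‖e‖·‖W‖. -/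
/-!
Write `A = W + e + L` and let `V` be spanned by the eigenvectors of `A'A` belonging to its `R`
largest eigenvalues together with the row space `(ker L)ᗮ` of `L`, so `dim V ≤ R + R⁰`. For an
orthonormal basis `(c_k)` of `Vᗮ`, the Ky Fan principle gives
`∑_{r > R} μ_r(A'A) ≥ ∑_k ‖A c_k‖²`, and since `L c_k = 0` the right side is
`∑_k ‖W c_k‖² + ∑_k ‖e c_k‖² + 2 ∑_k ⟪W c_k, e c_k⟫`. Ky Fan again bounds the first sum below
by the sum of the `dim Vᗮ ≥ T - R - R⁰` smallest eigenvalues of `W'W`. Completing `(c_k)` to an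
orthonormal basis of `ℝ^T` turns the other two sums into `Tr(ee')` and `Tr(We')` minus
`dim V` terms bounded by `‖e‖²` and `‖e‖‖W‖` respectively.
-/

open Matrix MeasureTheory
open scoped BigOperators

open Finset Module Submodule
open scoped RealInnerProductSpace

-- `∑ f d - ∑_F f ≥ τ (∑ d - #F) = 0`, splitting both sums at `F`.
lemma sum_le_sum_mul_of_threshold {ι : Type*} [Fintype ι] [DecidableEq ι] (F : Finset ι)
    {f d : ι → ℝ} {τ : ℝ} (hF : ∀ i ∈ F, f i ≤ τ) (hFc : ∀ i ∉ F, τ ≤ f i)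
    (hd0 : ∀ i, 0 ≤ d i) (hd1 : ∀ i, d i ≤ 1) (hd : ∑ i, d i = #F) :
    ∑ i ∈ F, f i ≤ ∑ i, f i * d i := by
  have hin : ∑ i ∈ F, τ * (d i - 1) ≤ ∑ i ∈ F, f i * (d i - 1) :=
    sum_le_sum fun i hi => mul_le_mul_of_nonpos_right (hF i hi) (by linarith [hd1 i])
  have hout : ∑ i ∈ Fᶜ, τ * d i ≤ ∑ i ∈ Fᶜ, f i * d i :=
    sum_le_sum fun i hi => mul_le_mul_of_nonneg_right (hFc i (mem_compl.1 hi)) (hd0 i)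
  have hτ : ∑ i ∈ F, τ * (d i - 1) + ∑ i ∈ Fᶜ, τ * d i = 0 := by
    rw [← mul_sum, ← mul_sum, ← mul_add, sum_sub_distrib, sub_add_eq_add_sub,
      sum_add_sum_compl, hd]
    simp
  have hF_sub : ∑ i ∈ F, f i * (d i - 1) = ∑ i ∈ F, f i * d i - ∑ i ∈ F, f i := by
    simp only [mul_sub, mul_one, sum_sub_distrib]
  linarith [sum_add_sum_compl F fun i => f i * d i]

lemma sum_mul_le_sum_of_nonneg {ι : Type*} [Fintype ι] [DecidableEq ι] (F : Finset ι)
    {f d : ι → ℝ} (hf : ∀ i, 0 ≤ f i) (hd1 : ∀ i, d i ≤ 1) (hdF : ∀ i ∉ F, d i = 0) :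
    ∑ i, f i * d i ≤ ∑ i ∈ F, f i := by
  rw [← sum_subset (subset_univ F) fun i _ hi => by rw [hdF i hi, mul_zero]]
  exact sum_le_sum fun i _ => mul_le_of_le_one_right (hf i) (hd1 i)

noncomputable def sumSmallest {n : ℕ} (f : Fin n → ℝ) (m : ℕ) : ℝ :=
  ∑ j : Fin n with j.val < m, f (Tuple.sort f j)

lemma exists_sort_threshold {n : ℕ} (f : Fin n → ℝ) (m : ℕ) :
    ∃ τ, ∀ j : Fin n, ((j : ℕ) < m → f (Tuple.sort f j) ≤ τ) ∧
      (m ≤ (j : ℕ) → τ ≤ f (Tuple.sort f j)) := by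
  by_cases hm : m < n
  · refine ⟨f (Tuple.sort f ⟨m, hm⟩), fun j => ⟨fun hj => ?_, fun hj => ?_⟩⟩ <;>
      apply Tuple.monotone_sort f <;> rw [Fin.le_def] <;> simp only <;> omega
  · obtain ⟨τ, hτ⟩ := (Set.finite_range f).bddAbove
    exact ⟨τ, fun j => ⟨fun _ => hτ (Set.mem_range_self _), fun hj => by omega⟩⟩

lemma sumSmallest_le_sum_mul {n m : ℕ} (f d : Fin n → ℝ) (hm : m ≤ n) (hd0 : ∀ i, 0 ≤ d i)
    (hd1 : ∀ i, d i ≤ 1) (hd : ∑ i, d i = m) :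
    sumSmallest f m ≤ ∑ i, f i * d i := by
  obtain ⟨τ, hτ⟩ := exists_sort_threshold f m
  rw [← Equiv.sum_comp (Tuple.sort f)]
  refine sum_le_sum_mul_of_threshold _ (fun j hj => (hτ j).1 (by simpa using hj))
    (fun j hj => (hτ j).2 (by simpa using hj)) (fun i => hd0 _) (fun i => hd1 _) ?_
  rw [Equiv.sum_comp, hd, Fin.card_filter_val_lt, min_eq_right hm]

lemma sum_mul_le_sumSmallest {n m : ℕ} (f d : Fin n → ℝ) (hf : ∀ i, 0 ≤ f i)
    (hd1 : ∀ i, d i ≤ 1) (hd : ∀ j : Fin n, m ≤ (j : ℕ) → d (Tuple.sort f j) = 0) :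
    ∑ i, f i * d i ≤ sumSmallest f m := by
  rw [← Equiv.sum_comp (Tuple.sort f)]
  exact sum_mul_le_sum_of_nonneg _ (fun i => hf _) (fun i => hd1 _)
    fun j hj => hd j (by simpa using hj)

lemma sumSmallest_mono {n m m' : ℕ} {f : Fin n → ℝ} (hf : ∀ i, 0 ≤ f i) (h : m ≤ m') :
    sumSmallest f m ≤ sumSmallest f m' :=
  sum_le_sum_of_subset_of_nonneg (monotone_filter_right _ fun j hj => by omega)
    fun _ _ _ => hf _

lemma Orthonormal.sum_inner_sq_le {ι E : Type*} [Fintype ι] [NormedAddCommGroup E]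
    [InnerProductSpace ℝ E] {c : ι → E} (hc : Orthonormal ℝ c) (x : E) :
    ∑ k, ⟪x, c k⟫ ^ 2 ≤ ‖x‖ ^ 2 := by
  simpa [real_inner_comm x] using hc.sum_inner_products_le (s := univ) x

lemma Matrix.IsHermitian.inner_toEuclideanLin_eq_sum {n : Type*} [Fintype n] [DecidableEq n]
    {S : Matrix n n ℝ} (hS : S.IsHermitian) (x : EuclideanSpace ℝ n) :
    ⟪x, S.toEuclideanLin x⟫ = ∑ j, hS.eigenvalues j * ⟪hS.eigenvectorBasis j, x⟫ ^ 2 := by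
  rw [← hS.eigenvectorBasis.sum_inner_mul_inner]
  refine sum_congr rfl fun j _ => ?_
  rw [← isSymmetric_toEuclideanLin_iff.2 hS, toLpLin_apply, hS.mulVec_eigenvectorBasis,
    WithLp.toLp_smul, WithLp.toLp_ofLp, real_inner_smul_left, real_inner_comm x]
  ring

namespace Matrix.IsHermitian

variable {n : ℕ} {S : Matrix (Fin n) (Fin n) ℝ} (hS : S.IsHermitian)
  {κ : Type*} [Fintype κ] {c : κ → EuclideanSpace ℝ (Fin n)}

lemma sum_inner_toEuclideanLin_eq_sum_mul :
    ∑ k, ⟪c k, S.toEuclideanLin (c k)⟫ =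
      ∑ j, hS.eigenvalues j * ∑ k, ⟪hS.eigenvectorBasis j, c k⟫ ^ 2 := by
  simp_rw [hS.inner_toEuclideanLin_eq_sum, mul_sum]
  exact sum_comm

lemma sumSmallest_le_sum_inner (hc : Orthonormal ℝ c) :
    sumSmallest hS.eigenvalues (Fintype.card κ) ≤ ∑ k, ⟪c k, S.toEuclideanLin (c k)⟫ := by
  have hv := hS.eigenvectorBasis.orthonormal
  rw [hS.sum_inner_toEuclideanLin_eq_sum_mul]
  refine sumSmallest_le_sum_mul _ _ ?_ (fun j => sum_nonneg fun k _ => sq_nonneg _)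
    (fun j => by simpa [hv.1 j] using hc.sum_inner_sq_le (hS.eigenvectorBasis j)) ?_
  · simpa using hc.linearIndependent.fintype_card_le_finrank
  · rw [sum_comm]
    simp [hS.eigenvectorBasis.sum_sq_inner_right, hc.1]

lemma sum_inner_le_sumSmallest (hc : Orthonormal ℝ c) (hS₀ : ∀ j, 0 ≤ hS.eigenvalues j)
    {m : ℕ} (horth : ∀ j : Fin n, m ≤ j.val → ∀ k,
      ⟪hS.eigenvectorBasis (Tuple.sort hS.eigenvalues j), c k⟫ = 0) :
    ∑ k, ⟪c k, S.toEuclideanLin (c k)⟫ ≤ sumSmallest hS.eigenvalues m := by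
  have hv := hS.eigenvectorBasis.orthonormal
  rw [hS.sum_inner_toEuclideanLin_eq_sum_mul]
  exact sum_mul_le_sumSmallest _ _ hS₀
    (fun j => by simpa [hv.1 j] using hc.sum_inner_sq_le (hS.eigenvectorBasis j))
    fun j hj => by simp [horth j hj]

end Matrix.IsHermitian

lemma sum_Icc_mu_eq_sumSmallest {n : ℕ} {S : Matrix (Fin n) (Fin n) ℝ} (hS : S.IsHermitian)
    (R : ℕ) : ∑ r ∈ Icc (R + 1) n, mu S r = sumSmallest hS.eigenvalues (n - R) := by
  refine sum_bij' (fun r hr => ⟨n - r, by simp at hr; omega⟩) (fun j _ => n - j.val)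
    (fun r hr => by simp at hr ⊢; omega) (fun j hj => by simp at hj ⊢; omega)
    (fun r hr => by simp at hr ⊢; omega) (fun j hj => by ext; simp; omega) fun r hr => ?_
  simp only [mem_Icc] at hr
  rw [mu, dif_pos ⟨hS, by omega, hr.2⟩, Function.comp_apply]
  congr 3
  ext
  simp only [Fin.val_rev]
  omega

lemma exists_orthonormalBasis_sum_mem_orthogonal {𝕜 E : Type*} [RCLike 𝕜]
    [NormedAddCommGroup E] [InnerProductSpace 𝕜 E] [FiniteDimensional 𝕜 E] (K : Submodule 𝕜 E) :
    ∃ b : OrthonormalBasis (Fin (finrank 𝕜 K) ⊕ Fin (finrank 𝕜 Kᗮ)) 𝕜 E,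
      ∀ k, b (Sum.inr k) ∈ Kᗮ := by
  set u := stdOrthonormalBasis 𝕜 K
  set c := stdOrthonormalBasis 𝕜 Kᗮ
  have hon : Orthonormal 𝕜 (Sum.elim (K.subtype ∘ u) (Kᗮ.subtype ∘ c)) := by
    refine ⟨?_, ?_⟩
    · rintro (i | k)
      · exact (norm_coe _).trans (u.orthonormal.1 i)
      · exact (norm_coe _).trans (c.orthonormal.1 k)
    · rintro (i | k) (j | l) h <;> simp only [Sum.elim_inl, Sum.elim_inr, Function.comp_apply]
      · exact u.orthonormal.2 fun hij => h (by rw [hij])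
      · exact K.inner_right_of_mem_orthogonal (u i).2 (c l).2
      · exact K.inner_left_of_mem_orthogonal (u j).2 (c k).2
      · exact c.orthonormal.2 fun hkl => h (by rw [hkl])
  have hspan : ⊤ ≤ span 𝕜 (Set.range (Sum.elim (K.subtype ∘ u) (Kᗮ.subtype ∘ c))) := by
    rw [Set.Sum.elim_range, span_union, Set.range_comp, Set.range_comp, ← map_span,
      ← map_span, ← u.coe_toBasis, ← c.coe_toBasis, u.toBasis.span_eq, c.toBasis.span_eq,
      map_subtype_top, map_subtype_top, sup_orthogonal_of_hasOrthogonalProjection]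
  exact ⟨OrthonormalBasis.mk hon hspan, fun k => by simp [(c k).2]⟩

lemma Matrix.finrank_orthogonal_ker_toEuclideanLin {m n : ℕ} (L : Matrix (Fin m) (Fin n) ℝ) :
    finrank ℝ (LinearMap.ker L.toEuclideanLin)ᗮ = L.rank := by
  have h₁ := (LinearMap.ker L.toEuclideanLin).finrank_add_finrank_orthogonal
  have h₂ := LinearMap.finrank_range_add_finrank_ker L.toEuclideanLin
  rw [rank_eq_finrank_range_toLin L (EuclideanSpace.basisFun _ ℝ).toBasis
    (EuclideanSpace.basisFun _ ℝ).toBasis]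
  change _ = finrank ℝ (LinearMap.range L.toEuclideanLin)
  omega

lemma exists_orthonormalBasis_inr_orthogonal_mem_ker {m n : ℕ}
    (s : Finset (EuclideanSpace ℝ (Fin n))) (L : Matrix (Fin m) (Fin n) ℝ) :
    ∃ p q, ∃ b : OrthonormalBasis (Fin p ⊕ Fin q) ℝ (EuclideanSpace ℝ (Fin n)),
      p ≤ #s + L.rank ∧
      ∀ k, (∀ x ∈ s, ⟪x, b (.inr k)⟫ = 0) ∧ L.toEuclideanLin (b (.inr k)) = 0 := by
  set K := span ℝ (s : Set (EuclideanSpace ℝ (Fin n))) ⊔ (LinearMap.ker L.toEuclideanLin)ᗮ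
  obtain ⟨b, hb⟩ := exists_orthonormalBasis_sum_mem_orthogonal K
  refine ⟨_, _, b, ?_, fun k => ⟨fun x hx => ?_, ?_⟩⟩
  · calc finrank ℝ K ≤ _ := finrank_add_le_finrank_add_finrank _ _
      _ ≤ #s + L.rank := by
        rw [L.finrank_orthogonal_ker_toEuclideanLin]
        exact Nat.add_le_add_right (finrank_span_finset_le_card s) _
  · exact K.inner_right_of_mem_orthogonal (mem_sup_left (subset_span hx)) (hb k)
  · rw [← LinearMap.mem_ker, ← orthogonal_orthogonal (LinearMap.ker _)]
    exact orthogonal_le le_sup_right (hb k)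

lemma Matrix.trace_toEuclideanLin {𝕜 n : Type*} [RCLike 𝕜] [Fintype n] [DecidableEq n]
    (M : Matrix n n 𝕜) : LinearMap.trace 𝕜 _ M.toEuclideanLin = M.trace := by
  rw [toEuclideanLin_eq_toLin_orthonormal,
    LinearMap.trace_eq_matrix_trace 𝕜 (EuclideanSpace.basisFun n 𝕜).toBasis,
    LinearMap.toMatrix_toLin]

lemma Matrix.inner_toEuclideanLin_transpose_mul {m n : Type*} [Fintype m] [Fintype n]
    [DecidableEq m] [DecidableEq n] (X Y : Matrix m n ℝ) (x : EuclideanSpace ℝ n) :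
    ⟪x, (Xᵀ * Y).toEuclideanLin x⟫ = ⟪X.toEuclideanLin x, Y.toEuclideanLin x⟫ := by
  rw [← conjTranspose_eq_transpose_of_trivial, toLpLin_mul_same, LinearMap.comp_apply,
    toEuclideanLin_conjTranspose_eq_adjoint, LinearMap.adjoint_inner_right]

lemma norm_toEuclideanLin_le {m n : ℕ} (X : Matrix (Fin m) (Fin n) ℝ)
    (x : EuclideanSpace ℝ (Fin n)) : ‖X.toEuclideanLin x‖ ≤ opNorm X * ‖x‖ :=
  (LinearMap.toContinuousLinearMap X.toEuclideanLin).le_opNorm x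

lemma inner_toEuclideanLin_le_opNorm_mul {m n : ℕ} (X Y : Matrix (Fin m) (Fin n) ℝ)
    {x : EuclideanSpace ℝ (Fin n)} (hx : ‖x‖ = 1) :
    ⟪X.toEuclideanLin x, Y.toEuclideanLin x⟫ ≤ opNorm X * opNorm Y := by
  have hX := norm_toEuclideanLin_le X x
  have hY := norm_toEuclideanLin_le Y x
  rw [hx, mul_one] at hX hY
  exact (real_inner_le_norm _ _).trans (mul_le_mul hX hY (norm_nonneg _) (norm_nonneg _))

lemma trace_transpose_mul_sub_le_sum_inner_inr {m n : ℕ} {ι κ : Type*} [Fintype ι] [Fintype κ]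
    (X Y : Matrix (Fin m) (Fin n) ℝ)
    (b : OrthonormalBasis (ι ⊕ κ) ℝ (EuclideanSpace ℝ (Fin n))) :
    (Xᵀ * Y).trace - Fintype.card ι * (opNorm X * opNorm Y) ≤
      ∑ k, ⟪X.toEuclideanLin (b (.inr k)), Y.toEuclideanLin (b (.inr k))⟫ := by
  have htrace : (Xᵀ * Y).trace =
      ∑ i, ⟪X.toEuclideanLin (b (.inl i)), Y.toEuclideanLin (b (.inl i))⟫ +
      ∑ k, ⟪X.toEuclideanLin (b (.inr k)), Y.toEuclideanLin (b (.inr k))⟫ := by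
    rw [← trace_toEuclideanLin, LinearMap.trace_eq_sum_inner _ b, Fintype.sum_sum_type]
    simp_rw [inner_toEuclideanLin_transpose_mul]
  have hinl : ∑ i, ⟪X.toEuclideanLin (b (.inl i)), Y.toEuclideanLin (b (.inl i))⟫ ≤
      Fintype.card ι * (opNorm X * opNorm Y) := by
    simpa using sum_le_sum fun i (_ : i ∈ univ) =>
      inner_toEuclideanLin_le_opNorm_mul X Y (b.orthonormal.1 (.inl i))
  linarith

lemma sumSmallest_add_trace_sub_le_sum_inner {N T : ℕ} {ι κ : Type*} [Fintype ι] [Fintype κ]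
    (W e L : Matrix (Fin N) (Fin T) ℝ) (hW : (Wᵀ * W).IsHermitian)
    (b : OrthonormalBasis (ι ⊕ κ) ℝ (EuclideanSpace ℝ (Fin T)))
    (hL : ∀ k, L.toEuclideanLin (b (.inr k)) = 0) :
    sumSmallest hW.eigenvalues (Fintype.card κ)
        + ((e * eᵀ).trace - Fintype.card ι * (opNorm e * opNorm e))
        + 2 * ((W * eᵀ).trace - Fintype.card ι * (opNorm W * opNorm e)) ≤
      ∑ k, ⟪b (.inr k), ((W + e + L)ᵀ * (W + e + L)).toEuclideanLin (b (.inr k))⟫ := by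
  have hc : Orthonormal ℝ fun k => b (.inr k) := b.orthonormal.comp _ Sum.inr_injective
  have hWW := hW.sumSmallest_le_sum_inner hc
  have hee := trace_transpose_mul_sub_le_sum_inner_inr e e b
  have hWe := trace_transpose_mul_sub_le_sum_inner_inr W e b
  rw [trace_mul_comm] at hee
  rw [← trace_transpose_mul W eᵀ, transpose_transpose]
  have hexpand : ∀ k, ⟪b (.inr k), ((W + e + L)ᵀ * (W + e + L)).toEuclideanLin (b (.inr k))⟫ =
      ⟪b (.inr k), (Wᵀ * W).toEuclideanLin (b (.inr k))⟫ +
        ⟪e.toEuclideanLin (b (.inr k)), e.toEuclideanLin (b (.inr k))⟫ +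
        2 * ⟪W.toEuclideanLin (b (.inr k)), e.toEuclideanLin (b (.inr k))⟫ := fun k => by
    simp only [inner_toEuclideanLin_transpose_mul, map_add, LinearMap.add_apply, hL, add_zero,
      inner_add_left, inner_add_right, real_inner_comm (W.toEuclideanLin _)]
    ring
  simp only [hexpand, sum_add_distrib, ← mul_sum]
  linarith

lemma Fin.card_filter_sub_le_val (n R : ℕ) : #{j : Fin n | n - R ≤ j.val} ≤ R := by
  have h₁ := card_filter_add_card_filter_not (s := univ) fun j : Fin n => j.val < n - R
  simp only [not_lt, card_univ, Fintype.card_fin, Fin.card_filter_val_lt] at h₁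
  omega

theorem statement5_general {N T : ℕ} (W e L : Matrix (Fin N) (Fin T) ℝ)
    (R R0 : ℕ) (hL : L.rank ≤ R0) :
    ∑ r ∈ Finset.Icc (R + 1) T, mu ((W + e + L)ᵀ * (W + e + L)) r ≥
      ∑ r ∈ Finset.Icc (R + R0 + 1) T, mu (Wᵀ * W) r
        + Matrix.trace (e * eᵀ)
        - 2 * (R + R0 : ℝ) * opNorm e ^ 2
        + 2 * Matrix.trace (W * eᵀ)
        - 2 * (R + R0 : ℝ) * opNorm e * opNorm W := by
  have hA : ((W + e + L)ᵀ * (W + e + L)).IsHermitian := isHermitian_conjTranspose_mul_self _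
  have hW : (Wᵀ * W).IsHermitian := isHermitian_conjTranspose_mul_self W
  obtain ⟨p, q, b, hp, hb⟩ := exists_orthonormalBasis_inr_orthogonal_mem_ker
    ((univ.filter fun j : Fin T => T - R ≤ j.val).image
      (hA.eigenvectorBasis ∘ Tuple.sort hA.eigenvalues)) L
  have hT : T = p + q := by
    simpa using finrank_euclideanSpace_fin.symm.trans (finrank_eq_card_basis b.toBasis)
  have hpR : p ≤ R + R0 :=
    hp.trans (add_le_add (card_image_le.trans (Fin.card_filter_sub_le_val T R)) hL)
  have hc : Orthonormal ℝ fun k => b (.inr k) := b.orthonormal.comp _ Sum.inr_injective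
  have hupper := hA.sum_inner_le_sumSmallest hc
    (eigenvalues_conjTranspose_mul_self_nonneg (W + e + L))
    fun j hj k => (hb k).1 _ (mem_image_of_mem _ (mem_filter.2 ⟨mem_univ _, hj⟩))
  have hlower := sumSmallest_add_trace_sub_le_sum_inner W e L hW b fun k => (hb k).2
  have hmono : sumSmallest hW.eigenvalues (T - (R + R0)) ≤ sumSmallest hW.eigenvalues q :=
    sumSmallest_mono (eigenvalues_conjTranspose_mul_self_nonneg W) (by omega)
  rw [sum_Icc_mu_eq_sumSmallest hA, sum_Icc_mu_eq_sumSmallest hW]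
  simp only [Fintype.card_fin] at hlower
  have hpR' : (p : ℝ) ≤ R + R0 := by exact_mod_cast hpR
  have hee := mul_le_mul_of_nonneg_right hpR' (mul_self_nonneg (opNorm e))
  have hWe := mul_le_mul_of_nonneg_right hpR'
    (mul_nonneg (norm_nonneg _) (norm_nonneg _) : 0 ≤ opNorm W * opNorm e)
  have hslack : 0 ≤ (R + R0 : ℝ) * (opNorm e * opNorm e) :=
    mul_nonneg (by positivity) (mul_self_nonneg _)
  linarith

/-- For N×T matrices W, e, L with rank(L) ≤ R⁰ and R + R⁰ ≤ T:
Σ_{r=R+1}^{T} μ_r[(W+e+L)'(W+e+L)] ≥ Σ_{r=R+R⁰+1}^{T} μ_r(W'W) + Tr(ee')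
− 2(R+R⁰)‖e‖² + 2Tr(We') − 2(R+R⁰)‖e‖·‖W‖. -/
theorem statement5 {N T : ℕ} (W e L : Matrix (Fin N) (Fin T) ℝ)
    (R R0 : ℕ) (hL : L.rank ≤ R0) (hRT : R + R0 ≤ T) :
    ∑ r ∈ Finset.Icc (R + 1) T, mu ((W + e + L)ᵀ * (W + e + L)) r ≥
      ∑ r ∈ Finset.Icc (R + R0 + 1) T, mu (Wᵀ * W) r
        + Matrix.trace (e * eᵀ)
        - 2 * (R + R0 : ℝ) * opNorm e ^ 2
        + 2 * Matrix.trace (W * eᵀ)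
        - 2 * (R + R0 : ℝ) * opNorm e * opNorm W :=
  statement5_general W e L R R0 hL
end

section
/- Let e and L be N×T matrices with rank(L) ≤ R and R ≤ T. Then Σ_{r=R+1}^{T} μ_r[(e + L)'(e + L)] ≤ Tr(e' e). -/
open Matrix MeasureTheory
open scoped BigOperators

/-!
Order the eigenvalues of `S = (e + L)ᵀ(e + L)` increasingly and let `U` diagonalise `S`. For any
`W` with orthonormal columns, the diagonal entries `t j` of `Uᵀ W Wᵀ U` lie in `[0, 1]` and
sum to the number of columns of `W`, while `tr (Wᵀ S W) = ∑ λ j * t j`; since the eigenvalues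
are nonnegative, this is at least the sum of as many smallest eigenvalues as `W` has columns
(Ky Fan). Taking for `W` an orthonormal basis of `ker L`, which has at least `T - R` columns,
gives `(e + L) W = e W`, and `tr ((e W)ᵀ (e W)) ≤ tr (eᵀ e)` because `1 - W Wᵀ` is a
projection.
-/

theorem Monotone.sum_ite_lt_le_sum_mul {n k : ℕ} {g s : Fin n → ℝ} (hg : Monotone g)
    (hg0 : ∀ j, 0 ≤ g j) (hs0 : ∀ j, 0 ≤ s j) (hs1 : ∀ j, s j ≤ 1)
    (hk : (k : ℝ) ≤ ∑ j, s j) :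
    ∑ j : Fin n, (if (j : ℕ) < k then g j else 0) ≤ ∑ j, g j * s j := by
  rcases Nat.eq_zero_or_pos k with rfl | hk0
  · simpa using Finset.sum_nonneg fun j _ => mul_nonneg (hg0 j) (hs0 j)
  have hkn : k ≤ n := by
    have : ∑ j, s j ≤ n := by
      simpa using Finset.sum_le_sum fun j (_ : j ∈ Finset.univ) => hs1 j
    exact_mod_cast hk.trans this
  set c := g ⟨k - 1, by omega⟩
  have hcount : ∑ j : Fin n, (if (j : ℕ) < k then (1 : ℝ) else 0) = k := by
    rw [← Finset.sum_filter, Finset.sum_const, Fin.card_filter_val_lt, min_eq_right hkn,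
      nsmul_one]
  -- Compare with the threshold `c`, the `k`-th smallest value of `g`.
  have hterm : ∀ j : Fin n, (if (j : ℕ) < k then g j else 0) ≤
      g j * s j + c * ((if (j : ℕ) < k then 1 else 0) - s j) := by
    intro j
    split_ifs with hj
    · have : g j ≤ c := hg (Fin.le_def.2 (by simp only; omega))
      nlinarith [hs1 j]
    · have : c ≤ g j := hg (Fin.le_def.2 (by simp only; omega))
      nlinarith [hs0 j]
  calc ∑ j : Fin n, (if (j : ℕ) < k then g j else 0)
      ≤ ∑ j, (g j * s j + c * ((if (j : ℕ) < k then 1 else 0) - s j)) :=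
        Finset.sum_le_sum fun j _ => hterm j
    _ = ∑ j, g j * s j - c * (∑ j, s j - k) := by
        rw [Finset.sum_add_distrib, ← Finset.mul_sum, Finset.sum_sub_distrib, hcount]; ring
    _ ≤ ∑ j, g j * s j := by nlinarith [hg0 ⟨k - 1, by omega⟩]

theorem mu_eq_sorted_eigenvalues {m : ℕ} {S : Matrix (Fin m) (Fin m) ℝ} (hS : S.IsHermitian)
    {r : ℕ} (h1 : 1 ≤ r) (h2 : r ≤ m) :
    mu S r = (hS.eigenvalues ∘ Tuple.sort hS.eigenvalues) ⟨m - r, by omega⟩ := by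
  rw [mu, dif_pos ⟨hS, h1, h2⟩]
  exact congrArg _ (Fin.ext (by simp only [Fin.val_rev]; omega))

theorem sum_Icc_mu_eq_sum_ite {m : ℕ} {S : Matrix (Fin m) (Fin m) ℝ} (hS : S.IsHermitian)
    (R : ℕ) : ∑ r ∈ Finset.Icc (R + 1) m, mu S r =
      ∑ j : Fin m, if (j : ℕ) < m - R then (hS.eigenvalues ∘ Tuple.sort hS.eigenvalues) j
        else 0 := by
  rw [← Finset.sum_filter]
  refine Finset.sum_bij' (fun r hr => ⟨m - r, by rw [Finset.mem_Icc] at hr; omega⟩)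
    (fun j _ => m - j) (fun r hr => ?_) (fun j hj => ?_) (fun r hr => ?_) (fun j hj => ?_)
    (fun r hr => ?_)
  · rw [Finset.mem_Icc] at hr
    simp only [Finset.mem_filter, Finset.mem_univ, true_and]
    omega
  · simp only [Finset.mem_filter, Finset.mem_univ, true_and] at hj
    rw [Finset.mem_Icc]
    omega
  · rw [Finset.mem_Icc] at hr
    simp only
    omega
  · simp only [Finset.mem_filter, Finset.mem_univ, true_and] at hj
    exact Fin.ext (by simp only; omega)
  · rw [Finset.mem_Icc] at hr
    exact mu_eq_sorted_eigenvalues hS (by omega) hr.2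

namespace Matrix

variable {n κ : Type*} [Fintype n] [Fintype κ] [DecidableEq n] [DecidableEq κ]

theorem IsHermitian.trace_mul_eq_sum_eigenvalues_mul {S : Matrix n n ℝ} (hS : S.IsHermitian)
    (M : Matrix n n ℝ) :
    (S * M).trace = ∑ j, hS.eigenvalues j *
      ((hS.eigenvectorUnitary : Matrix n n ℝ)ᵀ * M * hS.eigenvectorUnitary) j j := by
  set U : Matrix n n ℝ := (hS.eigenvectorUnitary : Matrix n n ℝ)
  have hSpec : S = U * diagonal hS.eigenvalues * Uᵀ := by
    simpa [Unitary.conjStarAlgAut_apply, star_eq_conjTranspose] using hS.spectral_theorem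
  calc (S * M).trace = (U * diagonal hS.eigenvalues * Uᵀ * M).trace := by rw [← hSpec]
    _ = (diagonal hS.eigenvalues * (Uᵀ * M * U)).trace := by
        simp only [Matrix.mul_assoc]; rw [trace_mul_comm]; simp only [Matrix.mul_assoc]
    _ = _ := by simp [trace, diagonal_mul]

theorem posSemidef_one_sub_mul_transpose {W : Matrix n κ ℝ} (hW : Wᵀ * W = 1) :
    (1 - W * Wᵀ).PosSemidef := by
  have hidem : (1 - W * Wᵀ)ᵀ * (1 - W * Wᵀ) = 1 - W * Wᵀ := by
    have : W * Wᵀ * (W * Wᵀ) = W * Wᵀ := by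
      rw [Matrix.mul_assoc, ← Matrix.mul_assoc Wᵀ, hW, Matrix.one_mul]
    simp only [transpose_sub, transpose_one, transpose_mul, transpose_transpose, sub_mul, mul_sub,
      Matrix.one_mul, Matrix.mul_one, this]
    abel
  rw [← hidem, ← conjTranspose_eq_transpose_of_trivial]
  exact posSemidef_conjTranspose_mul_self _

theorem trace_transpose_mul_self_mul_le {m : Type*} [Fintype m] (e : Matrix m n ℝ)
    {W : Matrix n κ ℝ} (hW : Wᵀ * W = 1) :
    ((e * W)ᵀ * (e * W)).trace ≤ (eᵀ * e).trace := by
  have h := ((posSemidef_one_sub_mul_transpose hW).mul_mul_conjTranspose_same e).trace_nonneg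
  rw [conjTranspose_eq_transpose_of_trivial, Matrix.mul_sub, Matrix.sub_mul, trace_sub,
    Matrix.mul_one, trace_mul_comm e] at h
  rw [transpose_mul, trace_mul_comm]
  simp only [Matrix.mul_assoc] at h ⊢
  linarith

theorem PosSemidef.sum_ite_lt_sorted_eigenvalues_le_trace {m : ℕ}
    {S : Matrix (Fin m) (Fin m) ℝ} (hS : S.PosSemidef) {W : Matrix (Fin m) κ ℝ}
    (hW : Wᵀ * W = 1) {k : ℕ} (hk : k ≤ Fintype.card κ) :
    ∑ j : Fin m,
        (if (j : ℕ) < k then (hS.1.eigenvalues ∘ Tuple.sort hS.1.eigenvalues) j else 0)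
      ≤ (Wᵀ * S * W).trace := by
  set U : Matrix (Fin m) (Fin m) ℝ := (hS.1.eigenvectorUnitary : Matrix (Fin m) (Fin m) ℝ)
  have hUU : Uᵀ * U = 1 := by
    simpa [star_eq_conjTranspose] using (mem_unitaryGroup_iff').mp hS.1.eigenvectorUnitary.2
  have hUU' : U * Uᵀ = 1 := by
    simpa [star_eq_conjTranspose] using (mem_unitaryGroup_iff).mp hS.1.eigenvectorUnitary.2
  set t : Fin m → ℝ := fun j => (Uᵀ * (W * Wᵀ) * U) j j
  have ht0 : ∀ j, 0 ≤ t j := fun j => by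
    simpa using ((posSemidef_self_mul_conjTranspose W).conjTranspose_mul_mul_same U).diag_nonneg
      (i := j)
  have ht1 : ∀ j, t j ≤ 1 := fun j => by
    have := ((posSemidef_one_sub_mul_transpose hW).conjTranspose_mul_mul_same U).diag_nonneg
      (i := j)
    rw [conjTranspose_eq_transpose_of_trivial, Matrix.mul_sub, Matrix.sub_mul, Matrix.mul_one,
      hUU] at this
    simpa [t] using this
  have htsum : ∑ j, t j = Fintype.card κ := by
    calc ∑ j, t j = (Uᵀ * (W * Wᵀ) * U).trace := rfl
      _ = (Wᵀ * W).trace := by rw [trace_mul_cycle, hUU', Matrix.one_mul, trace_mul_comm]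
      _ = Fintype.card κ := by rw [hW, trace_one]
  have htrace : (Wᵀ * S * W).trace = ∑ j, hS.1.eigenvalues j * t j := by
    rw [trace_mul_cycle, trace_mul_comm]
    exact hS.1.trace_mul_eq_sum_eigenvalues_mul _
  set σ := Tuple.sort hS.1.eigenvalues
  calc _ ≤ ∑ j, (hS.1.eigenvalues ∘ σ) j * t (σ j) :=
        (Tuple.monotone_sort _).sum_ite_lt_le_sum_mul (fun j => hS.eigenvalues_nonneg _)
          (fun j => ht0 _) (fun j => ht1 _) (by rw [Equiv.sum_comp σ t, htsum]; exact_mod_cast hk)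
    _ = ∑ j, hS.1.eigenvalues j * t j := Equiv.sum_comp σ fun j => hS.1.eigenvalues j * t j
    _ = _ := htrace.symm

theorem exists_orthonormal_cols_mul_eq_zero {m : Type*} [Fintype m] (L : Matrix m n ℝ) :
    ∃ (d : ℕ) (W : Matrix n (Fin d) ℝ),
      Wᵀ * W = 1 ∧ L * W = 0 ∧ Fintype.card n - L.rank ≤ d := by
  set K := LinearMap.ker (toEuclideanLin L)
  have hK : Fintype.card n - L.rank ≤ Module.finrank ℝ K := by
    have hr : L.rank = Module.finrank ℝ (LinearMap.range (toEuclideanLin L)) := by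
      rw [toEuclideanLin_eq_toLin_orthonormal]; exact rank_eq_finrank_range_toLin ..
    have := LinearMap.finrank_range_add_finrank_ker (toEuclideanLin L)
    rw [finrank_euclideanSpace] at this
    rw [hr, ← this, Nat.add_sub_cancel_left]
  set b := stdOrthonormalBasis ℝ K
  refine ⟨_, of fun x j => (b j : EuclideanSpace ℝ n) x, ?_, ?_, hK⟩
  · ext i j
    have := orthonormal_iff_ite.mp b.orthonormal j i
    rw [Submodule.coe_inner, PiLp.inner_apply] at this
    simpa [Matrix.mul_apply, one_apply, RCLike.inner_apply, @eq_comm _ j i] using this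
  · ext i j
    have := congrArg (· i) (LinearMap.mem_ker.mp (b j).2)
    rw [ofLp_toLpLin] at this
    simpa [Matrix.mul_apply, mulVec, dotProduct] using this

end Matrix

theorem statement6_general {N T : ℕ} (e L : Matrix (Fin N) (Fin T) ℝ)
    (R : ℕ) (hL : L.rank ≤ R) :
    ∑ r ∈ Finset.Icc (R + 1) T, mu ((e + L)ᵀ * (e + L)) r ≤
      Matrix.trace (eᵀ * e) := by
  have hS : ((e + L)ᵀ * (e + L)).PosSemidef := by
    simpa only [conjTranspose_eq_transpose_of_trivial] using
      posSemidef_conjTranspose_mul_self (e + L)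
  obtain ⟨d, W, hW, hLW, hd⟩ := L.exists_orthonormal_cols_mul_eq_zero
  have heW : (e + L) * W = e * W := by rw [Matrix.add_mul, hLW, add_zero]
  calc ∑ r ∈ Finset.Icc (R + 1) T, mu ((e + L)ᵀ * (e + L)) r
      = ∑ j : Fin T, if (j : ℕ) < T - R then
          (hS.1.eigenvalues ∘ Tuple.sort hS.1.eigenvalues) j else 0 :=
        sum_Icc_mu_eq_sum_ite hS.1 R
    _ ≤ (Wᵀ * ((e + L)ᵀ * (e + L)) * W).trace :=
        hS.sum_ite_lt_sorted_eigenvalues_le_trace hW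
          (by simp only [Fintype.card_fin] at hd ⊢; omega)
    _ = ((e * W)ᵀ * (e * W)).trace := by
        rw [← heW, transpose_mul]; simp only [Matrix.mul_assoc]
    _ ≤ (eᵀ * e).trace := e.trace_transpose_mul_self_mul_le hW

/-- For N×T matrices e, L with rank(L) ≤ R and R ≤ T:
Σ_{r=R+1}^{T} μ_r[(e+L)'(e+L)] ≤ Tr(e'e). -/
theorem statement6 {N T : ℕ} (e L : Matrix (Fin N) (Fin T) ℝ)
    (R : ℕ) (hL : L.rank ≤ R) (hRT : R ≤ T) :
    ∑ r ∈ Finset.Icc (R + 1) T, mu ((e + L)ᵀ * (e + L)) r ≤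
      Matrix.trace (eᵀ * e) :=
  statement6_general e L R hL
end

section
/- Let A and B be symmetric n×n matrices with A positive semi-definite. Let μ_1(A) ≥ μ_2(A) ≥ … ≥ μ_n(A) ≥ 0 be the eigenvalues of A with corresponding orthonormal eigenvectors ν_1,…,ν_n, and set b = max_{i,j=1,…,n} |ν_i' B ν_j|. Let r and q be positive integers with r < q ≤ n, suppose μ_r(A) > μ_i(A) for all i ≥ q, and suppose Σ_{i=q}^{n} b/(μ_r(A) − μ_i(A)) < 1. Then |μ_r(A+B) − μ_r(A)| ≤ (q−1)·b / (1 − Σ_{i=q}^{n} b/(μ_r(A) − μ_i(A))). -/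
open Matrix MeasureTheory
open scoped BigOperators

/-!
Write `c i = ν i ⬝ᵥ u`. For the upper bound, the easy half of Courant–Fischer gives a vector `u`
in the span of the top `r` eigenvectors of `A + B` and orthogonal to `ν 1, …, ν (r - 1)`, so that
`μ_r(A + B) ‖u‖² ≤ u ⬝ᵥ (A + B) u = ∑_{i ≥ r} μ_i(A) c_i² + u ⬝ᵥ B u` with
`|u ⬝ᵥ B u| ≤ b (∑ |c_i|)²`. Split the indices at `q`: the tail `i ≥ q` is absorbed by the gaps
`μ_r(A) - μ_i(A)` through a weighted Cauchy–Schwarz inequality, which is where the factor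
`1 - ∑_{i ≥ q} b / (μ_r(A) - μ_i(A))` comes from, while the `q - r` middle indices cost
`(q - r) b`. The lower bound is the same argument with `u` in the span of the bottom
`n - r + 1` eigenvectors of `A + B` and orthogonal to `ν (r + 1), …, ν n`; it gives
`μ_r(A) - μ_r(A + B) ≤ r b`.
-/

open Finset

def OrthonormalOn {m ι : Type*} [Fintype m] [DecidableEq ι] (ν : ι → m → ℝ) (I : Finset ι) :
    Prop :=
  ∀ i ∈ I, ∀ j ∈ I, ν i ⬝ᵥ ν j = if i = j then 1 else 0

theorem abs_sum_smul_dotProduct_mulVec_sum_smul_le {m ι : Type*} [Fintype m] (ν : ι → m → ℝ)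
    (I : Finset ι) (B : Matrix m m ℝ) {b : ℝ} (hB : ∀ i ∈ I, ∀ j ∈ I, |ν i ⬝ᵥ B *ᵥ ν j| ≤ b)
    (c : ι → ℝ) :
    |(∑ i ∈ I, c i • ν i) ⬝ᵥ B *ᵥ (∑ i ∈ I, c i • ν i)| ≤ b * (∑ i ∈ I, |c i|) ^ 2 := by
  have hexp : (∑ i ∈ I, c i • ν i) ⬝ᵥ B *ᵥ (∑ i ∈ I, c i • ν i)
      = ∑ i ∈ I, ∑ j ∈ I, c i * c j * (ν i ⬝ᵥ B *ᵥ ν j) := by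
    simp only [Matrix.mulVec_sum, Matrix.mulVec_smul, dotProduct_sum, sum_dotProduct,
      dotProduct_smul, smul_dotProduct, smul_eq_mul, mul_sum]
    rw [sum_comm]
    exact sum_congr rfl fun i _ => sum_congr rfl fun j _ => by ring
  calc |(∑ i ∈ I, c i • ν i) ⬝ᵥ B *ᵥ (∑ i ∈ I, c i • ν i)|
      ≤ ∑ i ∈ I, ∑ j ∈ I, |c i| * |c j| * b := by
        rw [hexp]
        refine (abs_sum_le_sum_abs _ _).trans (sum_le_sum fun i hi => ?_)
        refine (abs_sum_le_sum_abs _ _).trans (sum_le_sum fun j hj => ?_)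
        rw [abs_mul, abs_mul]
        exact mul_le_mul_of_nonneg_left (hB i hi j hj) (by positivity)
    _ = b * (∑ i ∈ I, |c i|) ^ 2 := by
        rw [sq, sum_mul_sum, mul_sum]
        exact sum_congr rfl fun i _ => by rw [mul_sum]; exact sum_congr rfl fun j _ => by ring

namespace OrthonormalOn

variable {m ι : Type*} [Fintype m] [DecidableEq ι] {ν : ι → m → ℝ} {I : Finset ι}

theorem mono (h : OrthonormalOn ν I) {J : Finset ι} (hJ : J ⊆ I) : OrthonormalOn ν J :=
  fun i hi j hj => h i (hJ hi) j (hJ hj)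

theorem sum_smul_dotProduct (h : OrthonormalOn ν I) (c : ι → ℝ) {j : ι} (hj : j ∈ I) :
    (∑ i ∈ I, c i • ν i) ⬝ᵥ ν j = c j := by
  rw [sum_dotProduct, sum_eq_single_of_mem j hj]
  · rw [smul_dotProduct, h j hj j hj, if_pos rfl, smul_eq_mul, mul_one]
  · intro i hi hij
    rw [smul_dotProduct, h i hi j hj, if_neg hij, smul_zero]

theorem dotProduct_sum_smul (h : OrthonormalOn ν I) (c : ι → ℝ) {j : ι} (hj : j ∈ I) :
    ν j ⬝ᵥ (∑ i ∈ I, c i • ν i) = c j := by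
  rw [dotProduct_comm, h.sum_smul_dotProduct c hj]

theorem sum_smul_dotProduct_sum_smul (h : OrthonormalOn ν I) (c d : ι → ℝ) :
    (∑ i ∈ I, c i • ν i) ⬝ᵥ (∑ i ∈ I, d i • ν i) = ∑ i ∈ I, c i * d i := by
  rw [dotProduct_sum]
  exact sum_congr rfl fun i hi => by rw [dotProduct_smul, h.sum_smul_dotProduct c hi, smul_eq_mul,
    mul_comm]

theorem sum_smul_dotProduct_mulVec_sum_smul (h : OrthonormalOn ν I) {S : Matrix m m ℝ}
    {g : ι → ℝ} (hS : ∀ i ∈ I, S *ᵥ ν i = g i • ν i) (c : ι → ℝ) :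
    (∑ i ∈ I, c i • ν i) ⬝ᵥ S *ᵥ (∑ i ∈ I, c i • ν i) = ∑ i ∈ I, g i * c i ^ 2 := by
  have hSu : S *ᵥ (∑ i ∈ I, c i • ν i) = ∑ i ∈ I, (g i * c i) • ν i := by
    rw [Matrix.mulVec_sum]
    exact sum_congr rfl fun i hi => by rw [Matrix.mulVec_smul, hS i hi, smul_smul, mul_comm]
  rw [hSu, h.sum_smul_dotProduct_sum_smul]
  exact sum_congr rfl fun i _ => by ring

theorem linearIndepOn (h : OrthonormalOn ν I) : LinearIndepOn ℝ ν (I : Set ι) :=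
  linearIndepOn_finset_iff.mpr fun c hc j hj => by
    rw [← h.sum_smul_dotProduct c hj, hc, zero_dotProduct]

theorem eq_sum_smul (h : OrthonormalOn ν I) (hcard : #I = Fintype.card m) (u : m → ℝ) :
    u = ∑ i ∈ I, (ν i ⬝ᵥ u) • ν i := by
  have hspan : Submodule.span ℝ (Set.range fun i : I => ν i) = ⊤ :=
    h.linearIndepOn.span_eq_top_of_card_eq_finrank' (by simp [hcard])
  obtain ⟨a, rfl⟩ := (Submodule.mem_span_range_iff_exists_fun ℝ).mp (hspan ▸ Submodule.mem_top :
    u ∈ Submodule.span ℝ _)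
  set c : ι → ℝ := fun i => if hi : i ∈ I then a ⟨i, hi⟩ else 0
  have hu : ∑ i : I, a i • ν i = ∑ i ∈ I, c i • ν i := by
    rw [← sum_coe_sort I]
    exact sum_congr rfl fun i _ => by simp [c]
  rw [hu]
  exact sum_congr rfl fun i hi => by rw [h.dotProduct_sum_smul c hi]

theorem eq_sum_smul_of_dotProduct_eq_zero (h : OrthonormalOn ν I) (hcard : #I = Fintype.card m)
    {I' : Finset ι} (hI' : I' ⊆ I) {u : m → ℝ} (hu : ∀ i ∈ I, i ∉ I' → ν i ⬝ᵥ u = 0) :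
    u = ∑ i ∈ I', (ν i ⬝ᵥ u) • ν i := by
  conv_lhs => rw [h.eq_sum_smul hcard u]
  exact (sum_subset hI' fun i hi hi' => by rw [hu i hi hi', zero_smul]).symm

theorem abs_sum_smul_dotProduct_add_mulVec_sub_le (h : OrthonormalOn ν I) {A B : Matrix m m ℝ}
    {g : ι → ℝ} (hA : ∀ i ∈ I, A *ᵥ ν i = g i • ν i) {b : ℝ}
    (hB : ∀ i ∈ I, ∀ j ∈ I, |ν i ⬝ᵥ B *ᵥ ν j| ≤ b) (c : ι → ℝ) :
    |(∑ i ∈ I, c i • ν i) ⬝ᵥ (A + B) *ᵥ (∑ i ∈ I, c i • ν i) - ∑ i ∈ I, g i * c i ^ 2| ≤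
      b * (∑ i ∈ I, |c i|) ^ 2 := by
  rw [Matrix.add_mulVec, dotProduct_add, h.sum_smul_dotProduct_mulVec_sum_smul hA,
    add_sub_cancel_left]
  exact abs_sum_smul_dotProduct_mulVec_sum_smul_le ν I B hB c

end OrthonormalOn

section mu

variable {n : ℕ} {S : Matrix (Fin n) (Fin n) ℝ}

theorem mu_eq_eigenvalues_sort (hS : S.IsHermitian) {k : ℕ} (hk : k ∈ Icc 1 n) :
    mu S k = hS.eigenvalues (Tuple.sort hS.eigenvalues
      (Fin.rev ⟨k - 1, by rw [mem_Icc] at hk; omega⟩)) := by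
  rw [mu, dif_pos ⟨hS, (mem_Icc.mp hk).1, (mem_Icc.mp hk).2⟩]
  rfl

theorem mu_antitoneOn (hS : S.IsHermitian) : AntitoneOn (mu S) (Icc 1 n) := by
  intro i hi j hj hij
  rw [mu_eq_eigenvalues_sort hS hi, mu_eq_eigenvalues_sort hS hj]
  refine Tuple.monotone_sort hS.eigenvalues (Fin.rev_le_rev.mpr ?_)
  rw [Fin.mk_le_mk]
  omega

theorem exists_orthonormalOn_mulVec_eq_mu_smul (hS : S.IsHermitian) :
    ∃ ω : ℕ → Fin n → ℝ, OrthonormalOn ω (Icc 1 n) ∧ ∀ k ∈ Icc 1 n, S *ᵥ ω k = mu S k • ω k := by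
  set e : ∀ k ∈ Icc 1 n, Fin n := fun k hk =>
    Tuple.sort hS.eigenvalues (Fin.rev ⟨k - 1, by rw [mem_Icc] at hk; omega⟩)
  have he : ∀ i hi j hj, e i hi = e j hj ↔ i = j := by
    intro i hi j hj
    rw [mem_Icc] at hi hj
    simp only [e, EmbeddingLike.apply_eq_iff_eq, Fin.rev_inj, Fin.mk.injEq]
    omega
  refine ⟨fun k => if hk : k ∈ Icc 1 n then ⇑(hS.eigenvectorBasis (e k hk)) else 0,
    fun i hi j hj => ?_, fun k hk => ?_⟩
  · have := orthonormal_iff_ite.mp hS.eigenvectorBasis.orthonormal (e i hi) (e j hj)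
    simp only [dif_pos hi, dif_pos hj]
    simpa only [EuclideanSpace.inner_eq_star_dotProduct, he, star_trivial, dotProduct_comm]
      using this
  · simp only [dif_pos hk]
    rw [hS.mulVec_eigenvectorBasis, mu_eq_eigenvalues_sort hS hk]

end mu

theorem exists_ne_zero_orthogonal_sum_smul {m ι κ : Type*} [Fintype m] (w : ι → m → ℝ)
    (v : κ → m → ℝ) {K : Finset ι} {J : Finset κ} (hJK : #J < #K) :
    ∃ c : ι → ℝ, (∃ k ∈ K, c k ≠ 0) ∧ ∀ j ∈ J, v j ⬝ᵥ ∑ k ∈ K, c k • w k = 0 := by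
  set x : ι → J → ℝ := fun k j => v j ⬝ᵥ w k
  have hdep : ¬ LinearIndepOn ℝ x (K : Set ι) := fun hli => by
    have := LinearIndependent.fintype_card_le_finrank (R := ℝ) hli
    simp only [Finset.coe_sort_coe, Fintype.card_coe, Module.finrank_fintype_fun_eq_card] at this
    omega
  simp only [linearIndepOn_finset_iff, not_forall, exists_prop] at hdep
  obtain ⟨c, hc, k, hk, hck⟩ := hdep
  refine ⟨c, ⟨k, hk, hck⟩, fun j hj => ?_⟩
  have := congrFun hc ⟨j, hj⟩
  simp only [Finset.sum_apply, Pi.smul_apply, smul_eq_mul, Pi.zero_apply, x] at this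
  simpa only [dotProduct_sum, dotProduct_smul, smul_eq_mul] using this

theorem exists_orthogonal_sum_smul_eigenvectors {m ι κ : Type*} [Fintype m] [DecidableEq ι]
    {S : Matrix m m ℝ} {ω : ι → m → ℝ} {g : ι → ℝ} {K : Finset ι} (hω : OrthonormalOn ω K)
    (hS : ∀ k ∈ K, S *ᵥ ω k = g k • ω k) (v : κ → m → ℝ) {J : Finset κ} (hJK : #J < #K) :
    ∃ (u : m → ℝ) (c : ι → ℝ), 0 < u ⬝ᵥ u ∧ (∀ j ∈ J, v j ⬝ᵥ u = 0) ∧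
      u ⬝ᵥ u = ∑ k ∈ K, c k ^ 2 ∧ u ⬝ᵥ S *ᵥ u = ∑ k ∈ K, g k * c k ^ 2 := by
  obtain ⟨c, ⟨k, hk, hck⟩, horth⟩ := exists_ne_zero_orthogonal_sum_smul ω v hJK
  have hnorm : (∑ k ∈ K, c k • ω k) ⬝ᵥ (∑ k ∈ K, c k • ω k) = ∑ k ∈ K, c k ^ 2 := by
    rw [hω.sum_smul_dotProduct_sum_smul]
    exact sum_congr rfl fun k _ => (sq (c k)).symm
  refine ⟨_, c, ?_, horth, hnorm, hω.sum_smul_dotProduct_mulVec_sum_smul hS c⟩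
  rw [hnorm]
  exact sum_pos' (fun k _ => sq_nonneg _) ⟨k, hk, by positivity⟩

section mu

variable {n : ℕ} {S : Matrix (Fin n) (Fin n) ℝ} {κ : Type*}

theorem exists_orthogonal_mu_mul_le_dotProduct_mulVec (hS : S.IsHermitian) {r : ℕ}
    (hr : r ∈ Icc 1 n) (v : κ → Fin n → ℝ) {J : Finset κ} (hJ : #J < r) :
    ∃ u : Fin n → ℝ, 0 < u ⬝ᵥ u ∧ (∀ j ∈ J, v j ⬝ᵥ u = 0) ∧
      mu S r * (u ⬝ᵥ u) ≤ u ⬝ᵥ S *ᵥ u := by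
  obtain ⟨ω, hω, hωS⟩ := exists_orthonormalOn_mulVec_eq_mu_smul hS
  have hK : Icc 1 r ⊆ Icc 1 n := Icc_subset_Icc le_rfl (mem_Icc.mp hr).2
  obtain ⟨u, c, hu, horth, hnorm, hform⟩ := exists_orthogonal_sum_smul_eigenvectors
    (hω.mono hK) (fun k hk => hωS k (hK hk)) v (J := J)
    (by rwa [Nat.card_Icc, Nat.add_sub_cancel])
  refine ⟨u, hu, horth, ?_⟩
  rw [hnorm, hform, mul_sum]
  exact sum_le_sum fun k hk => mul_le_mul_of_nonneg_right
    (mu_antitoneOn hS (hK hk) hr (mem_Icc.mp hk).2) (sq_nonneg _)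

theorem exists_orthogonal_dotProduct_mulVec_le_mu_mul (hS : S.IsHermitian) {r : ℕ}
    (hr : r ∈ Icc 1 n) (v : κ → Fin n → ℝ) {J : Finset κ} (hJ : #J + r ≤ n) :
    ∃ u : Fin n → ℝ, 0 < u ⬝ᵥ u ∧ (∀ j ∈ J, v j ⬝ᵥ u = 0) ∧
      u ⬝ᵥ S *ᵥ u ≤ mu S r * (u ⬝ᵥ u) := by
  obtain ⟨ω, hω, hωS⟩ := exists_orthonormalOn_mulVec_eq_mu_smul hS
  have hK : Icc r n ⊆ Icc 1 n := Icc_subset_Icc (mem_Icc.mp hr).1 le_rfl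
  obtain ⟨u, c, hu, horth, hnorm, hform⟩ := exists_orthogonal_sum_smul_eigenvectors
    (hω.mono hK) (fun k hk => hωS k (hK hk)) v (J := J)
    (by rw [Nat.card_Icc]; have := mem_Icc.mp hr; omega)
  refine ⟨u, hu, horth, ?_⟩
  rw [hnorm, hform, mul_sum]
  exact sum_le_sum fun k hk => mul_le_mul_of_nonneg_right
    (mu_antitoneOn hS hr (hK hk) (mem_Icc.mp hk).1) (sq_nonneg _)

end mu

theorem mul_add_sq_le_of_mul_sq_le {b s x y G : ℝ} (hb : 0 ≤ b) (hs : 0 ≤ s) (hs1 : s < 1)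
    (hG : 0 ≤ G) (hyG : b * y ^ 2 ≤ s * G) :
    b * (x + y) ^ 2 ≤ b * x ^ 2 / (1 - s) + G := by
  rcases hs.eq_or_lt with rfl | hs
  · have hby : b * y = 0 := by nlinarith [sq_nonneg (b * y)]
    calc b * (x + y) ^ 2 = b * x ^ 2 + b * y * (2 * x + y) := by ring
      _ ≤ b * x ^ 2 / (1 - 0) + G := by rw [hby, sub_zero, div_one]; linarith
  · rw [div_add' _ _ _ (by linarith), le_div_iff₀ (by linarith)]
    nlinarith [mul_nonneg hb (sq_nonneg (s * x - (1 - s) * y)), mul_pos hs (sub_pos.2 hs1)]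

section QuadraticEstimates

variable {ι : Type*} {μ c : ι → ℝ} {m b : ℝ}

theorem sum_mul_sq_add_mul_sq_sum_abs_le [DecidableEq ι] {M T : Finset ι} (hMT : Disjoint M T)
    (hb : 0 ≤ b) (hM : ∀ i ∈ M, μ i ≤ m) (hT : ∀ i ∈ T, μ i < m)
    (hs : ∑ i ∈ T, b / (m - μ i) < 1) :
    ∑ i ∈ M ∪ T, μ i * c i ^ 2 + b * (∑ i ∈ M ∪ T, |c i|) ^ 2 ≤
      (m + #M * b / (1 - ∑ i ∈ T, b / (m - μ i))) * ∑ i ∈ M ∪ T, c i ^ 2 := by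
  set s := ∑ i ∈ T, b / (m - μ i)
  set G := ∑ i ∈ T, (m - μ i) * c i ^ 2
  have hgap : ∀ i ∈ T, 0 < m - μ i := fun i hi => sub_pos.2 (hT i hi)
  have hs0 : 0 ≤ s := sum_nonneg fun i hi => div_nonneg hb (hgap i hi).le
  have hG0 : 0 ≤ G := sum_nonneg fun i hi => mul_nonneg (hgap i hi).le (sq_nonneg _)
  have hA : ∑ i ∈ M ∪ T, μ i * c i ^ 2 ≤ m * ∑ i ∈ M ∪ T, c i ^ 2 - G := by
    have hMpart : ∑ i ∈ M, μ i * c i ^ 2 ≤ ∑ i ∈ M, m * c i ^ 2 :=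
      sum_le_sum fun i hi => mul_le_mul_of_nonneg_right (hM i hi) (sq_nonneg _)
    have hTpart : ∑ i ∈ T, μ i * c i ^ 2 = ∑ i ∈ T, m * c i ^ 2 - G := by
      rw [← sum_sub_distrib]
      exact sum_congr rfl fun i _ => by ring
    rw [sum_union hMT, sum_union hMT, hTpart, mul_add, mul_sum, mul_sum]
    linarith
  -- Cauchy–Schwarz with weights `1 / (m - μ i)` and `(m - μ i) * c i ^ 2`
  have hT : b * (∑ i ∈ T, |c i|) ^ 2 ≤ s * G := by
    have hcs := sum_sq_le_sum_mul_sum_of_sq_le_mul T (r := fun i => |c i|)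
      (fun i hi => one_div_nonneg.2 (hgap i hi).le)
      (fun i hi => mul_nonneg (hgap i hi).le (sq_nonneg (c i)))
      (fun i hi => by rw [sq_abs, ← mul_assoc, one_div_mul_cancel (hgap i hi).ne', one_mul])
    calc b * (∑ i ∈ T, |c i|) ^ 2 ≤ b * ((∑ i ∈ T, 1 / (m - μ i)) * G) :=
          mul_le_mul_of_nonneg_left hcs hb
      _ = s * G := by
        rw [← mul_assoc, mul_sum T (fun i => 1 / (m - μ i)) b]
        simp only [mul_one_div, s, G]
  have hM : (∑ i ∈ M, |c i|) ^ 2 ≤ #M * ∑ i ∈ M ∪ T, c i ^ 2 := by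
    refine (sq_sum_le_card_mul_sum_sq (s := M) (f := fun i => |c i|)).trans ?_
    simp only [sq_abs]
    exact mul_le_mul_of_nonneg_left (sum_le_sum_of_subset_of_nonneg subset_union_left
      fun i _ _ => sq_nonneg _) (Nat.cast_nonneg _)
  have hB := mul_add_sq_le_of_mul_sq_le (x := ∑ i ∈ M, |c i|) hb hs0 hs hG0 hT
  rw [← sum_union hMT] at hB
  have hM' : b * (∑ i ∈ M, |c i|) ^ 2 / (1 - s) ≤
      b * (#M * ∑ i ∈ M ∪ T, c i ^ 2) / (1 - s) := by
    have : 0 < 1 - s := by linarith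
    gcongr
  calc _ ≤ m * ∑ i ∈ M ∪ T, c i ^ 2 + b * (#M * ∑ i ∈ M ∪ T, c i ^ 2) / (1 - s) := by linarith
    _ = _ := by ring

theorem sub_mul_sum_sq_le_sum_mul_sq_sub_mul_sq_sum_abs {R : Finset ι} (hb : 0 ≤ b)
    (hR : ∀ i ∈ R, m ≤ μ i) :
    (m - #R * b) * ∑ i ∈ R, c i ^ 2 ≤ ∑ i ∈ R, μ i * c i ^ 2 - b * (∑ i ∈ R, |c i|) ^ 2 := by
  have hA : m * ∑ i ∈ R, c i ^ 2 ≤ ∑ i ∈ R, μ i * c i ^ 2 := by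
    rw [mul_sum]
    exact sum_le_sum fun i hi => mul_le_mul_of_nonneg_right (hR i hi) (sq_nonneg _)
  have hB : (∑ i ∈ R, |c i|) ^ 2 ≤ #R * ∑ i ∈ R, c i ^ 2 := by
    simpa only [sq_abs] using sq_sum_le_card_mul_sum_sq (s := R) (f := fun i => |c i|)
  nlinarith [mul_le_mul_of_nonneg_left hB hb]

end QuadraticEstimates

section Perturbation

variable {n : ℕ} {A B : Matrix (Fin n) (Fin n) ℝ} {ν : ℕ → Fin n → ℝ} {b : ℝ} {r : ℕ}

theorem mu_add_sub_mu_le (hA : A.IsHermitian) (hS : (A + B).IsHermitian)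
    (hν : OrthonormalOn ν (Icc 1 n)) (heig : ∀ i ∈ Icc 1 n, A *ᵥ ν i = mu A i • ν i)
    (hbB : ∀ i ∈ Icc 1 n, ∀ j ∈ Icc 1 n, |ν i ⬝ᵥ B *ᵥ ν j| ≤ b) (hb : 0 ≤ b) {q : ℕ}
    (hr : 1 ≤ r) (hrq : r < q) (hq : q ≤ n) (hsep : ∀ i ∈ Icc q n, mu A i < mu A r)
    (hsum : ∑ i ∈ Icc q n, b / (mu A r - mu A i) < 1) :
    mu (A + B) r - mu A r ≤ ((q : ℝ) - r) * b / (1 - ∑ i ∈ Icc q n, b / (mu A r - mu A i)) := by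
  have hrn : r ∈ Icc 1 n := mem_Icc.2 ⟨hr, by omega⟩
  have hI : Icc r n ⊆ Icc 1 n := Icc_subset_Icc hr le_rfl
  obtain ⟨u, hu, horth, hray⟩ :=
    exists_orthogonal_mu_mul_le_dotProduct_mulVec hS hrn ν (J := Ico 1 r)
      (by rw [Nat.card_Ico]; omega)
  have hexp := hν.eq_sum_smul_of_dotProduct_eq_zero (by simp) hI (u := u)
    fun i hi hi' => horth i (by simp only [mem_Icc, mem_Ico] at hi hi' ⊢; omega)
  obtain ⟨c, rfl⟩ : ∃ c : ℕ → ℝ, u = ∑ i ∈ Icc r n, c i • ν i := ⟨_, hexp⟩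
  have hνr := hν.mono hI
  have hpert := hνr.abs_sum_smul_dotProduct_add_mulVec_sub_le (fun i hi => heig i (hI hi))
    (fun i hi j hj => hbB i (hI hi) j (hI hj)) c
  have hdisj : Disjoint (Ico r q) (Icc q n) :=
    disjoint_left.2 fun i hi hi' => by simp only [mem_Ico, mem_Icc] at hi hi'; omega
  have hunion : Ico r q ∪ Icc q n = Icc r n := by
    ext i; simp only [mem_union, mem_Ico, mem_Icc]; omega
  have hquad := sum_mul_sq_add_mul_sq_sum_abs_le (c := c) hdisj hb
    (fun i hi => mu_antitoneOn hA hrn (hI (hunion ▸ mem_union_left _ hi)) (mem_Ico.1 hi).1)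
    hsep hsum
  rw [hunion, Nat.card_Ico, Nat.cast_sub hrq.le] at hquad
  rw [hνr.sum_smul_dotProduct_sum_smul] at hu hray
  simp only [← sq] at hu hray
  rw [sub_le_iff_le_add']
  refine le_of_mul_le_mul_right ?_ hu
  linarith [(abs_le.1 hpert).2]

theorem mu_sub_mu_add_le (hA : A.IsHermitian) (hS : (A + B).IsHermitian)
    (hν : OrthonormalOn ν (Icc 1 n)) (heig : ∀ i ∈ Icc 1 n, A *ᵥ ν i = mu A i • ν i)
    (hbB : ∀ i ∈ Icc 1 n, ∀ j ∈ Icc 1 n, |ν i ⬝ᵥ B *ᵥ ν j| ≤ b) (hb : 0 ≤ b)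
    (hrn : r ∈ Icc 1 n) : mu A r - mu (A + B) r ≤ r * b := by
  have hI : Icc 1 r ⊆ Icc 1 n := Icc_subset_Icc le_rfl (mem_Icc.1 hrn).2
  obtain ⟨u, hu, horth, hray⟩ := exists_orthogonal_dotProduct_mulVec_le_mu_mul hS hrn ν
    (J := Ioc r n) (by rw [Nat.card_Ioc]; have := mem_Icc.1 hrn; omega)
  have hexp := hν.eq_sum_smul_of_dotProduct_eq_zero (by simp) hI (u := u)
    fun i hi hi' => horth i (by simp only [mem_Icc, mem_Ioc] at hi hi' ⊢; omega)
  obtain ⟨c, rfl⟩ : ∃ c : ℕ → ℝ, u = ∑ i ∈ Icc 1 r, c i • ν i := ⟨_, hexp⟩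
  have hνr := hν.mono hI
  have hpert := hνr.abs_sum_smul_dotProduct_add_mulVec_sub_le (fun i hi => heig i (hI hi))
    (fun i hi j hj => hbB i (hI hi) j (hI hj)) c
  have hquad := sub_mul_sum_sq_le_sum_mul_sq_sub_mul_sq_sum_abs (c := c) hb
    fun i hi => mu_antitoneOn hA (hI hi) hrn (mem_Icc.1 hi).2
  rw [Nat.card_Icc, Nat.add_sub_cancel] at hquad
  rw [hνr.sum_smul_dotProduct_sum_smul] at hu hray
  simp only [← sq] at hu hray
  rw [sub_le_iff_le_add, ← sub_le_iff_le_add']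
  refine le_of_mul_le_mul_right ?_ hu
  linarith [(abs_le.1 hpert).1]

end Perturbation

/-- eigenvalue perturbation bound. Let A, B be symmetric n×n matrices,
A positive semi-definite, with orthonormal eigenvectors ν_1,…,ν_n of A (for the decreasingly
ordered eigenvalues), b = max_{i,j} |ν_i' B ν_j|, 1 ≤ r < q ≤ n, μ_r(A) > μ_i(A) for i ≥ q,
and Σ_{i=q}^{n} b/(μ_r(A) − μ_i(A)) < 1. Then
|μ_r(A+B) − μ_r(A)| ≤ (q−1)b / (1 − Σ_{i=q}^{n} b/(μ_r(A) − μ_i(A))). -/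
theorem statement8 {n : ℕ} (A B : Matrix (Fin n) (Fin n) ℝ)
    (hA : A.PosSemidef) (hB : B.IsHermitian)
    (ν : ℕ → (Fin n → ℝ))
    (hortho : ∀ i ∈ Finset.Icc 1 n, ∀ j ∈ Finset.Icc 1 n,
      ν i ⬝ᵥ ν j = if i = j then (1 : ℝ) else 0)
    (heig : ∀ i ∈ Finset.Icc 1 n, A.mulVec (ν i) = mu A i • ν i)
    (b : ℝ)
    (hb : IsGreatest {x : ℝ | ∃ i ∈ Finset.Icc 1 n, ∃ j ∈ Finset.Icc 1 n,
      x = |ν i ⬝ᵥ B.mulVec (ν j)|} b)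
    (r q : ℕ) (hr : 1 ≤ r) (hrq : r < q) (hq : q ≤ n)
    (hsep : ∀ i ∈ Finset.Icc q n, mu A i < mu A r)
    (hsum : ∑ i ∈ Finset.Icc q n, b / (mu A r - mu A i) < 1) :
    |mu (A + B) r - mu A r| ≤
      ((q : ℝ) - 1) * b / (1 - ∑ i ∈ Finset.Icc q n, b / (mu A r - mu A i)) := by
  have hb0 : 0 ≤ b := by
    obtain ⟨i, -, j, -, rfl⟩ := hb.1
    exact abs_nonneg _
  have hbB : ∀ i ∈ Icc 1 n, ∀ j ∈ Icc 1 n, |ν i ⬝ᵥ B *ᵥ ν j| ≤ b :=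
    fun i hi j hj => hb.2 ⟨i, hi, j, hj, rfl⟩
  have hS := hA.1.add hB
  have hupper := mu_add_sub_mu_le hA.1 hS hortho heig hbB hb0 hr hrq hq hsep hsum
  have hlower := mu_sub_mu_add_le hA.1 hS hortho heig hbB hb0 (mem_Icc.2 ⟨hr, by omega⟩)
  set s := ∑ i ∈ Icc q n, b / (mu A r - mu A i)
  have hs : 0 < 1 - s := sub_pos.2 hsum
  have hs1 : 1 - s ≤ 1 :=
    sub_le_self _ (sum_nonneg fun i hi => div_nonneg hb0 (sub_pos.2 (hsep i hi)).le)
  have hrq' : (r : ℝ) ≤ q - 1 := by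
    rw [le_sub_iff_add_le]
    exact_mod_cast hrq
  rw [abs_sub_le_iff]
  constructor
  · refine hupper.trans (div_le_div_of_nonneg_right ?_ hs.le)
    gcongr
    exact_mod_cast hr
  · calc mu A r - mu (A + B) r ≤ r * b := hlower
      _ ≤ (q - 1) * b := by gcongr
      _ ≤ (q - 1) * b / (1 - s) :=
        le_div_self (mul_nonneg (by linarith [r.cast_nonneg (α := ℝ)]) hb0) hs hs1
end

section
/- Let A and B be symmetric n×n matrices. Let ν_1,…,ν_n be orthonormal eigenvectors of A with A ν_i = μ_i(A) ν_i and μ_1(A) ≥ … ≥ μ_n(A), let ν̃_1,…,ν̃_n be orthonormal eigenvectors of A+B with (A+B) ν̃_i = μ_i(A+B) ν̃_i, and set b = max_{i,j=1,…,n} |ν_i' B ν_j|. Let q < n and suppose |μ_i(A+B) − μ_i(A)| ≤ c₁ for all i ∈ {1,…,q+1}. Then Σ_{i=1}^{q} [μ_i(A) − μ_{q+1}(A)]·[1 − Σ_{r=1}^{q} (ν_r' ν̃_i)²] ≤ q(b + c₁). -/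
open Matrix MeasureTheory
open scoped BigOperators

/-!
Proof idea: expand `ν_r' (A + B) ν_r = μ_r(A) + ν_r' B ν_r ≥ μ_r(A) - b` in the eigenbasis `ν̃` of
`A + B`. Its weights `(ν̃_i' ν_r)²` sum to one, and the eigenvalues of `A + B` are at most
`μ_i(A) + c₁` for `i ≤ q` and at most `μ_{q+1}(A) + c₁` beyond, so with `d_i = μ_i(A) - μ_{q+1}(A)`
we get `d_r - ∑_{i ≤ q} d_i (ν̃_i' ν_r)² ≤ b + c₁`. Summing over `r ≤ q` and exchanging the two sums
gives the claim.
-/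

lemma Finset.sum_Icc_one_eq_sum_fin {M : Type*} [AddCommMonoid M] (n : ℕ) (f : ℕ → M) :
    ∑ i ∈ Finset.Icc 1 n, f i = ∑ i : Fin n, f (i + 1) := by
  rw [← Finset.Ico_add_one_right_eq_Icc, Finset.sum_Ico_eq_sum_range, Nat.add_sub_cancel,
    ← Fin.sum_univ_eq_sum_range (fun i => f (1 + i))]
  simp only [add_comm]

lemma Finset.sum_mul_one_sub_sum_eq {ι R : Type*} [CommRing R] (s : Finset ι) (d : ι → R)
    (w : ι → ι → R) :
    ∑ i ∈ s, d i * (1 - ∑ r ∈ s, w r i) = ∑ r ∈ s, (d r - ∑ i ∈ s, d i * w r i) := by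
  simp only [mul_sub, mul_one, Finset.sum_sub_distrib, Finset.mul_sum]
  rw [Finset.sum_comm (s := s) (t := s)]

namespace Matrix

lemma dotProduct_eq_sum_of_orthonormal {m : Type*} [Fintype m] [DecidableEq m]
    (u : m → m → ℝ) (hu : ∀ i j, u i ⬝ᵥ u j = if i = j then 1 else 0) (v w : m → ℝ) :
    v ⬝ᵥ w = ∑ i, (u i ⬝ᵥ v) * (u i ⬝ᵥ w) := by
  have hUUt : Matrix.of u * (Matrix.of u)ᵀ = 1 := by
    ext i j
    exact hu i j
  have hUtU : (Matrix.of u)ᵀ * Matrix.of u = 1 := mul_eq_one_comm.mp hUUt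
  calc v ⬝ᵥ w = (Matrix.of u *ᵥ v) ⬝ᵥ (Matrix.of u *ᵥ w) := by
        rw [dotProduct_mulVec, ← mulVec_transpose, mulVec_mulVec, hUtU, one_mulVec]
    _ = ∑ i, (u i ⬝ᵥ v) * (u i ⬝ᵥ w) := rfl

variable {n : ℕ}

lemma dotProduct_eq_sum_Icc_of_orthonormal (u : ℕ → Fin n → ℝ)
    (hu : ∀ i ∈ Finset.Icc 1 n, ∀ j ∈ Finset.Icc 1 n, u i ⬝ᵥ u j = if i = j then 1 else 0)
    (v w : Fin n → ℝ) :
    v ⬝ᵥ w = ∑ i ∈ Finset.Icc 1 n, (u i ⬝ᵥ v) * (u i ⬝ᵥ w) := by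
  have hmem (i : Fin n) : (i : ℕ) + 1 ∈ Finset.Icc 1 n := Finset.mem_Icc.mpr ⟨by omega, i.2⟩
  rw [Finset.sum_Icc_one_eq_sum_fin]
  refine dotProduct_eq_sum_of_orthonormal (fun i => u (i + 1)) (fun i j => ?_) v w
  rw [hu _ (hmem i) _ (hmem j)]
  simp only [Nat.add_right_cancel_iff, Fin.val_inj]

lemma dotProduct_mulVec_self_eq_sum_Icc {S : Matrix (Fin n) (Fin n) ℝ} (hS : S.IsSymm)
    (u : ℕ → Fin n → ℝ) (l : ℕ → ℝ)
    (hu : ∀ i ∈ Finset.Icc 1 n, ∀ j ∈ Finset.Icc 1 n, u i ⬝ᵥ u j = if i = j then 1 else 0)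
    (heig : ∀ i ∈ Finset.Icc 1 n, S *ᵥ u i = l i • u i) (x : Fin n → ℝ) :
    x ⬝ᵥ S *ᵥ x = ∑ i ∈ Finset.Icc 1 n, l i * (u i ⬝ᵥ x) ^ 2 := by
  rw [dotProduct_eq_sum_Icc_of_orthonormal u hu]
  refine Finset.sum_congr rfl fun i hi => ?_
  rw [dotProduct_mulVec, ← mulVec_transpose, hS.eq, heig i hi, smul_dotProduct, smul_eq_mul]
  ring

lemma mu_le_mu_of_le {S : Matrix (Fin n) (Fin n) ℝ} (hS : S.IsHermitian) {r s : ℕ} (hr : 1 ≤ r)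
    (hrs : r ≤ s) (hsn : s ≤ n) : mu S s ≤ mu S r := by
  rw [mu, dif_pos ⟨hS, hr.trans hrs, hsn⟩, mu, dif_pos ⟨hS, hr, hrs.trans hsn⟩]
  exact Tuple.monotone_sort _ (Fin.rev_le_rev.mpr (Fin.mk_le_mk.mpr (by omega)))

lemma dotProduct_mulVec_self_le_of_mu_le {S : Matrix (Fin n) (Fin n) ℝ} (hS : S.IsHermitian)
    (u : ℕ → Fin n → ℝ)
    (hu : ∀ i ∈ Finset.Icc 1 n, ∀ j ∈ Finset.Icc 1 n, u i ⬝ᵥ u j = if i = j then 1 else 0)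
    (heig : ∀ i ∈ Finset.Icc 1 n, S *ᵥ u i = mu S i • u i)
    {q : ℕ} (hq : q < n) (a : ℕ → ℝ) (ha : ∀ i ∈ Finset.Icc 1 (q + 1), mu S i ≤ a i)
    {x : Fin n → ℝ} (hx : x ⬝ᵥ x = 1) :
    x ⬝ᵥ S *ᵥ x ≤ a (q + 1) + ∑ i ∈ Finset.Icc 1 q, (a i - a (q + 1)) * (u i ⬝ᵥ x) ^ 2 := by
  set w : ℕ → ℝ := fun i => (u i ⬝ᵥ x) ^ 2
  have hsplit (f : ℕ → ℝ) :
      ∑ i ∈ Finset.Icc 1 n, f i = ∑ i ∈ Finset.Icc 1 q, f i + ∑ i ∈ Finset.Ioc q n, f i := by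
    rw [← zero_add 1, Finset.Icc_add_one_left_eq_Ioc, Finset.Icc_add_one_left_eq_Ioc]
    exact (Finset.sum_Ioc_consecutive f (Nat.zero_le q) hq.le).symm
  have hw : ∑ i ∈ Finset.Icc 1 q, w i + ∑ i ∈ Finset.Ioc q n, w i = 1 := by
    rw [← hsplit, ← hx, dotProduct_eq_sum_Icc_of_orthonormal u hu x x]
    simp only [w, sq]
  have hhead : ∑ i ∈ Finset.Icc 1 q, mu S i * w i ≤ ∑ i ∈ Finset.Icc 1 q, a i * w i :=
    Finset.sum_le_sum fun i hi => mul_le_mul_of_nonneg_right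
      (ha i (Finset.Icc_subset_Icc_right (Nat.le_succ q) hi)) (sq_nonneg _)
  have htail : ∑ i ∈ Finset.Ioc q n, mu S i * w i ≤ ∑ i ∈ Finset.Ioc q n, a (q + 1) * w i := by
    refine Finset.sum_le_sum fun i hi => mul_le_mul_of_nonneg_right ?_ (sq_nonneg _)
    obtain ⟨hqi, hin⟩ := Finset.mem_Ioc.mp hi
    exact (mu_le_mu_of_le hS (by omega) hqi hin).trans (ha _ (by simp))
  rw [dotProduct_mulVec_self_eq_sum_Icc (isHermitian_iff_isSymm.mp hS) u _ hu heig, hsplit]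
  rw [← Finset.mul_sum] at htail
  have hexpand : ∑ i ∈ Finset.Icc 1 q, (a i - a (q + 1)) * w i
      = ∑ i ∈ Finset.Icc 1 q, a i * w i - a (q + 1) * ∑ i ∈ Finset.Icc 1 q, w i := by
    simp only [sub_mul, Finset.sum_sub_distrib, Finset.mul_sum]
  linear_combination hhead + htail + a (q + 1) * hw - hexpand

end Matrix

open Matrix in
/-- With A, B symmetric, ν (resp. ν̃) orthonormal eigenvectors of A
(resp. A+B) for the decreasingly ordered eigenvalues, b = max_{i,j} |ν_i' B ν_j|, q < n and
|μ_i(A+B) − μ_i(A)| ≤ c₁ for i ≤ q+1: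
Σ_{i=1}^{q} [μ_i(A) − μ_{q+1}(A)]·[1 − Σ_{r=1}^{q} (ν_r'ν̃_i)²] ≤ q(b + c₁). -/
theorem statement13 {n : ℕ} (A B : Matrix (Fin n) (Fin n) ℝ)
    (hA : A.IsHermitian) (hB : B.IsHermitian)
    (ν νt : ℕ → (Fin n → ℝ))
    (hortho : ∀ i ∈ Finset.Icc 1 n, ∀ j ∈ Finset.Icc 1 n,
      ν i ⬝ᵥ ν j = if i = j then (1 : ℝ) else 0)
    (heig : ∀ i ∈ Finset.Icc 1 n, A.mulVec (ν i) = mu A i • ν i)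
    (horthot : ∀ i ∈ Finset.Icc 1 n, ∀ j ∈ Finset.Icc 1 n,
      νt i ⬝ᵥ νt j = if i = j then (1 : ℝ) else 0)
    (heigt : ∀ i ∈ Finset.Icc 1 n, (A + B).mulVec (νt i) = mu (A + B) i • νt i)
    (b : ℝ)
    (hb : IsGreatest {x : ℝ | ∃ i ∈ Finset.Icc 1 n, ∃ j ∈ Finset.Icc 1 n,
      x = |ν i ⬝ᵥ B.mulVec (ν j)|} b)
    (q : ℕ) (hq : q < n)
    (c₁ : ℝ)
    (hc₁ : ∀ i ∈ Finset.Icc 1 (q + 1), |mu (A + B) i - mu A i| ≤ c₁) :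
    ∑ i ∈ Finset.Icc 1 q,
        (mu A i - mu A (q + 1)) * (1 - ∑ r ∈ Finset.Icc 1 q, (ν r ⬝ᵥ νt i) ^ 2) ≤
      (q : ℝ) * (b + c₁) := by
  set d : ℕ → ℝ := fun i => mu A i - mu A (q + 1)
  have hrow : ∀ r ∈ Finset.Icc 1 q,
      d r - ∑ i ∈ Finset.Icc 1 q, d i * (ν r ⬝ᵥ νt i) ^ 2 ≤ b + c₁ := by
    intro r hr
    have hrn : r ∈ Finset.Icc 1 n := Finset.Icc_subset_Icc_right hq.le hr
    have hunit : ν r ⬝ᵥ ν r = 1 := by simpa using hortho r hrn r hrn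
    have hquad : ν r ⬝ᵥ (A + B) *ᵥ ν r = mu A r + ν r ⬝ᵥ B *ᵥ ν r := by
      rw [add_mulVec, dotProduct_add, heig r hrn, dotProduct_smul, hunit, smul_eq_mul, mul_one]
    have hBr : -b ≤ ν r ⬝ᵥ B *ᵥ ν r := (abs_le.mp (hb.2 ⟨r, hrn, r, hrn, rfl⟩)).1
    have hupper := dotProduct_mulVec_self_le_of_mu_le (hA.add hB) νt horthot heigt hq
      (fun i => mu A i + c₁) (fun i hi => by linarith [(abs_le.mp (hc₁ i hi)).2]) hunit
    simp only [add_sub_add_right_eq_sub, dotProduct_comm (νt _)] at hupper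
    linarith
  calc ∑ i ∈ Finset.Icc 1 q, d i * (1 - ∑ r ∈ Finset.Icc 1 q, (ν r ⬝ᵥ νt i) ^ 2)
      = ∑ r ∈ Finset.Icc 1 q, (d r - ∑ i ∈ Finset.Icc 1 q, d i * (ν r ⬝ᵥ νt i) ^ 2) :=
        Finset.sum_mul_one_sub_sum_eq _ d _
    _ ≤ ∑ _r ∈ Finset.Icc 1 q, (b + c₁) := Finset.sum_le_sum hrow
    _ = q * (b + c₁) := by simp [mul_add]
end
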